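/- Let n ≥ 2 be an integer and γ ∈ (0, 1/2]. With 𝔷_1, 𝔷_2, 𝔷_3, 𝔷_4 defined piecewise as: 𝔷_1 = 2+2γ+1/(2γ), 𝔷_2 = (1+γ)²/(2γ), 𝔷_3 = 1/(2γ), 𝔷_4 = 0 for 0 < γ ≤ 1/(n+1), and 𝔷_1 = (1−n)(1+2γ)²/(2(1−2nγ)), 𝔷_2 = (n−2γ)²/(2(1−n)(1−2nγ)), 𝔷_3 = (1−n)/(2(1−2nγ)), 𝔷_4 = 1 + (1−2γ)/(1−2nγ) for 1/(n+1) ≤ γ ≤ 1/2, the characteristic polynomial of the upper-left (n+1)×(n+1) block B of the dual matrix 𝒵 satisfies det(x·I_{n+1} − B) = x^{n+1} − Λ_n(γ)·x^n, where Λ_n(γ) = ((n+1)(1+2γ) + (n+3)γ²)/(2γ) for 0 < γ ≤ 1/(n+1) and Λ_n(γ) = (n² + 2(n−1) − 4γ + 4nγ²)/(2(−1+2nγ)) for 1/(n+1) ≤ γ ≤ 1/2. In particular, the only nonzero eigenvalue of B is Λ_n(γ). -/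

import Mathlib

/-!
In both regimes `𝔷₁𝔷₃ = (1 + 𝔷₃ - 𝔷₄/2)²` and `𝔷₂𝔷₃ = (1/2 + 𝔷₃ - 𝔷₄/2)²` with nonnegative bases,
so `B = u uᵀ` is rank one with `u = (√𝔷₁, √𝔷₂, …, √𝔷₂, -√𝔷₃)`. Hence its characteristic
polynomial is `X^{n+1} - ‖u‖² X^n`, and `‖u‖² = 𝔷₁ + (n - 1)𝔷₂ + 𝔷₃` simplifies to `Λ_n(γ)`.
-/

open Polynomial

/-- The upper-left `(n+1) × (n+1)` block `B` of the dual matrix `𝒵` built from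
`𝔷_1, 𝔷_2, 𝔷_3, 𝔷_4`:
`[[𝔷_1, √(𝔷_1𝔷_2) j_{n-1}ᵀ, -1-𝔷_3+𝔷_4/2],
  [√(𝔷_1𝔷_2) j_{n-1}, 𝔷_2 J_{n-1}, (-1/2-𝔷_3+𝔷_4/2) j_{n-1}],
  [-1-𝔷_3+𝔷_4/2, (-1/2-𝔷_3+𝔷_4/2) j_{n-1}ᵀ, 𝔷_3]]`. -/
noncomputable def Bmat (n : ℕ) (z1 z2 z3 z4 : ℝ) :
    Matrix (Fin (n + 1)) (Fin (n + 1)) ℝ :=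
  Matrix.of fun p q =>
    if p.val = 0 ∧ q.val = 0 then z1
    else if (p.val = 0 ∧ 1 ≤ q.val ∧ q.val ≤ n - 1) ∨
        (1 ≤ p.val ∧ p.val ≤ n - 1 ∧ q.val = 0) then Real.sqrt (z1 * z2)
    else if (p.val = 0 ∧ q.val = n) ∨ (p.val = n ∧ q.val = 0) then -1 - z3 + z4 / 2
    else if 1 ≤ p.val ∧ p.val ≤ n - 1 ∧ 1 ≤ q.val ∧ q.val ≤ n - 1 then z2
    else if (1 ≤ p.val ∧ p.val ≤ n - 1 ∧ q.val = n) ∨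
        (p.val = n ∧ 1 ≤ q.val ∧ q.val ≤ n - 1) then -1 / 2 - z3 + z4 / 2
    else if p.val = n ∧ q.val = n then z3
    else 0

open Matrix

theorem Real.sqrt_mul_sqrt_eq_of_mul_eq_sq {x y w : ℝ} (hx : 0 ≤ x) (hw : 0 ≤ w)
    (h : x * y = w ^ 2) : √x * √y = w := by
  rw [← Real.sqrt_mul hx, h, Real.sqrt_sq hw]

def firstMidLastVec {R : Type*} (n : ℕ) (a b c : R) : Fin (n + 1) → R :=
  fun i => if i.val = 0 then a else if i.val = n then c else b

theorem firstMidLastVec_dotProduct_self {R : Type*} [CommRing R] {n : ℕ} (hn : 1 ≤ n)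
    (a b c : R) :
    firstMidLastVec n a b c ⬝ᵥ firstMidLastVec n a b c =
      a * a + ((n : R) - 1) * (b * b) + c * c := by
  obtain ⟨m, rfl⟩ : ∃ m, n = m + 1 := ⟨n - 1, by omega⟩
  rw [dotProduct, Fin.sum_univ_succ, Fin.sum_univ_castSucc]
  have hlt : ∀ x : Fin m, (x : ℕ) ≠ m := fun x => x.isLt.ne
  simp only [firstMidLastVec, Fin.coe_ofNat_eq_mod, Nat.zero_mod, ↓reduceIte, Fin.val_succ,
    Fin.val_castSucc, Nat.add_eq_zero_iff, one_ne_zero, and_false, Nat.add_right_cancel_iff, hlt,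
    Finset.sum_const, Finset.card_univ, Fintype.card_fin, nsmul_eq_mul, Fin.succ_last,
    Nat.succ_eq_add_one, Fin.val_last, Nat.cast_add, Nat.cast_one, add_sub_cancel_right]
  ring

theorem Bmat_eq_vecMulVec (n : ℕ) {z1 z2 z3 z4 : ℝ} (h1 : 0 ≤ z1) (h2 : 0 ≤ z2) (h3 : 0 ≤ z3)
    (h13 : √z1 * √z3 = 1 + z3 - z4 / 2) (h23 : √z2 * √z3 = 1 / 2 + z3 - z4 / 2) :
    Bmat n z1 z2 z3 z4 =
      vecMulVec (firstMidLastVec n √z1 √z2 (-√z3)) (firstMidLastVec n √z1 √z2 (-√z3)) := by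
  ext p q
  simp only [Bmat, firstMidLastVec, vecMulVec_apply, of_apply]
  split_ifs <;> first
    | omega
    | linarith [Real.sqrt_mul h1 z2, Real.mul_self_sqrt h1, Real.mul_self_sqrt h2,
        Real.mul_self_sqrt h3]

theorem Bmat_charpoly_of_sqrt_mul_sqrt {n : ℕ} (hn : 1 ≤ n) {z1 z2 z3 z4 : ℝ} (h1 : 0 ≤ z1)
    (h2 : 0 ≤ z2) (h3 : 0 ≤ z3) (h13 : √z1 * √z3 = 1 + z3 - z4 / 2)
    (h23 : √z2 * √z3 = 1 / 2 + z3 - z4 / 2) :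
    (Bmat n z1 z2 z3 z4).charpoly = X ^ (n + 1) - C (z1 + ((n : ℝ) - 1) * z2 + z3) * X ^ n := by
  rw [Bmat_eq_vecMulVec n h1 h2 h3 h13 h23, charpoly_vecMulVec, firstMidLastVec_dotProduct_self hn,
    neg_mul_neg, Real.mul_self_sqrt h1, Real.mul_self_sqrt h2, Real.mul_self_sqrt h3,
    Fintype.card_fin, Nat.add_sub_cancel, smul_eq_C_mul]

theorem Bmat_charpoly_of_pos (n : ℕ) (hn : 1 ≤ n) {γ : ℝ} (hγ : 0 < γ) :
    (Bmat n (2 + 2 * γ + 1 / (2 * γ)) ((1 + γ) ^ 2 / (2 * γ)) (1 / (2 * γ)) 0).charpoly =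
      X ^ (n + 1) -
        C ((((n : ℝ) + 1) * (1 + 2 * γ) + ((n : ℝ) + 3) * γ ^ 2) / (2 * γ)) * X ^ n := by
  rw [Bmat_charpoly_of_sqrt_mul_sqrt hn (by positivity) (by positivity) (by positivity)]
  · congr 3
    field_simp
    ring
  all_goals
    refine Real.sqrt_mul_sqrt_eq_of_mul_eq_sq (by positivity) ?_ (by field_simp; ring)
    rw [zero_div, sub_zero]
    positivity

theorem Bmat_charpoly_of_inv_succ_le (n : ℕ) (hn : 2 ≤ n) {γ : ℝ}
    (hγ1 : 1 / ((n : ℝ) + 1) ≤ γ) (hγ2 : γ ≤ 1 / 2) :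
    (Bmat n ((1 - (n : ℝ)) * (1 + 2 * γ) ^ 2 / (2 * (1 - 2 * (n : ℝ) * γ)))
      (((n : ℝ) - 2 * γ) ^ 2 / (2 * (1 - (n : ℝ)) * (1 - 2 * (n : ℝ) * γ)))
      ((1 - (n : ℝ)) / (2 * (1 - 2 * (n : ℝ) * γ)))
      (1 + (1 - 2 * γ) / (1 - 2 * (n : ℝ) * γ))).charpoly =
      X ^ (n + 1) -
        C (((n : ℝ) ^ 2 + 2 * ((n : ℝ) - 1) - 4 * γ + 4 * (n : ℝ) * γ ^ 2) /
            (2 * (-1 + 2 * (n : ℝ) * γ))) * X ^ n := by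
  have hn2 : (2 : ℝ) ≤ n := by exact_mod_cast hn
  have hγ : 1 ≤ ((n : ℝ) + 1) * γ := by rwa [div_le_iff₀' (by positivity)] at hγ1
  have hγ0 : 0 < γ := lt_of_lt_of_le (by positivity) hγ1
  have hneg : 1 - 2 * (n : ℝ) * γ < 0 := by nlinarith
  -- written in `field_simp`'s normal form, in which it looks for side conditions
  have hne : 1 - (n : ℝ) * 2 * γ ≠ 0 := by linarith
  have hn1 : 1 - (n : ℝ) ≠ 0 := by linarith
  have h1 : 0 ≤ (1 - (n : ℝ)) * (1 + 2 * γ) ^ 2 / (2 * (1 - 2 * (n : ℝ) * γ)) :=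
    div_nonneg_of_nonpos (mul_nonpos_of_nonpos_of_nonneg (by linarith) (sq_nonneg _))
      (by linarith)
  have h2 : 0 ≤ ((n : ℝ) - 2 * γ) ^ 2 / (2 * (1 - (n : ℝ)) * (1 - 2 * (n : ℝ) * γ)) :=
    div_nonneg (sq_nonneg _) (by nlinarith)
  have h3 : 0 ≤ (1 - (n : ℝ)) / (2 * (1 - 2 * (n : ℝ) * γ)) :=
    div_nonneg_of_nonpos (by linarith) (by linarith)
  rw [Bmat_charpoly_of_sqrt_mul_sqrt (by omega) h1 h2 h3]
  · congr 3
    rw [show -1 + 2 * (n : ℝ) * γ = -(1 - 2 * n * γ) by ring]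
    field_simp
    ring
  · refine Real.sqrt_mul_sqrt_eq_of_mul_eq_sq h1 ?_ (by field_simp; ring)
    rw [show 1 + (1 - (n : ℝ)) / (2 * (1 - 2 * (n : ℝ) * γ)) -
        (1 + (1 - 2 * γ) / (1 - 2 * (n : ℝ) * γ)) / 2 =
        (1 - (n : ℝ)) * (1 + 2 * γ) / (2 * (1 - 2 * n * γ)) by field_simp; ring]
    exact div_nonneg_of_nonpos (mul_nonpos_of_nonpos_of_nonneg (by linarith) (by linarith))
      (by linarith)
  · refine Real.sqrt_mul_sqrt_eq_of_mul_eq_sq h2 ?_ (by field_simp; ring)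
    rw [show 1 / 2 + (1 - (n : ℝ)) / (2 * (1 - 2 * (n : ℝ) * γ)) -
        (1 + (1 - 2 * γ) / (1 - 2 * (n : ℝ) * γ)) / 2 =
        (2 * γ - n) / (2 * (1 - 2 * n * γ)) by field_simp; ring]
    exact div_nonneg_of_nonpos (by linarith) (by linarith)

/-- With the dual variables `𝔷_1, 𝔷_2, 𝔷_3, 𝔷_4` defined piecewise in `γ ∈ (0, 1/2]` as
stated, the characteristic polynomial of the upper-left `(n+1) × (n+1)` block `B` of the dual
matrix `𝒵` is `x^{n+1} - Λ_n(γ) x^n`; in particular the only nonzero eigenvalue of `B` is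
`Λ_n(γ)`. -/
theorem Bmat_charpoly (n : ℕ) (hn : 2 ≤ n) (γ : ℝ)
    (hγ1 : 0 < γ) (hγ2 : γ ≤ 1 / 2) :
    (∀ z1 z2 z3 z4 : ℝ, γ ≤ 1 / ((n : ℝ) + 1) →
      z1 = 2 + 2 * γ + 1 / (2 * γ) →
      z2 = (1 + γ) ^ 2 / (2 * γ) →
      z3 = 1 / (2 * γ) →
      z4 = 0 →
      (Bmat n z1 z2 z3 z4).charpoly =
        X ^ (n + 1) -
          C ((((n : ℝ) + 1) * (1 + 2 * γ) + ((n : ℝ) + 3) * γ ^ 2) / (2 * γ)) * X ^ n) ∧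
    (∀ z1 z2 z3 z4 : ℝ, 1 / ((n : ℝ) + 1) ≤ γ →
      z1 = (1 - (n : ℝ)) * (1 + 2 * γ) ^ 2 / (2 * (1 - 2 * (n : ℝ) * γ)) →
      z2 = ((n : ℝ) - 2 * γ) ^ 2 / (2 * (1 - (n : ℝ)) * (1 - 2 * (n : ℝ) * γ)) →
      z3 = (1 - (n : ℝ)) / (2 * (1 - 2 * (n : ℝ) * γ)) →
      z4 = 1 + (1 - 2 * γ) / (1 - 2 * (n : ℝ) * γ) →
      (Bmat n z1 z2 z3 z4).charpoly =
        X ^ (n + 1) -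
          C (((n : ℝ) ^ 2 + 2 * ((n : ℝ) - 1) - 4 * γ + 4 * (n : ℝ) * γ ^ 2) /
              (2 * (-1 + 2 * (n : ℝ) * γ))) * X ^ n) := by
  constructor
  · rintro z1 z2 z3 z4 - rfl rfl rfl rfl
    exact Bmat_charpoly_of_pos n (by omega) hγ1
  · rintro z1 z2 z3 z4 hγ rfl rfl rfl rfl
    exact Bmat_charpoly_of_inv_succ_le n hn hγ hγ2
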